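/- Multi-source generalization bound: Fix μ > 0, probability measures P_1, ..., P_N and Q on X × Y, and weights α ∈ Δ = {α : α_j ≥ 0, Σ_j α_j = 1}. For any scoring function f ∈ F, L_Q(h_f) ≤ Σ_{j=1}^N α_j ( L^μ_{P_j}(f) + d^μ_f(P_j, Q) ) + β, where β = min_{g ∈ F} { Σ_{j=1}^N α_j L^μ_{P_j}(g) + L^μ_Q(g) }. -/

import Mathlib

/-!
Pick `g ∈ F` attaining `β`. Pointwise, a misclassification `h_f(x) ≠ y` costs at most
`W_μ(ω_g(x, y)) + W_μ(ω_g(x, h_f(x)))`, since `g` cannot give both labels a positive margin; and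
`W_μ(ω_g(x, h_f(x))) ≤ W_μ(ω_f(x, y)) + W_μ(ω_g(x, y))`, since `ω_f(x, y) ≤ 0` unless `y = h_f(x)`.
Integrating, passing from `Q` to each `P_j` at the price of `d j`, and averaging over `j`
with the weights `α` gives the bound.
-/

open MeasureTheory

/-- The ramp loss `W_μ`. -/
noncomputable def ramp (μ v : ℝ) : ℝ :=
  if μ ≤ v then 0 else if v ≤ 0 then 1 else 1 - v / μ

/-- The margin `ω_f(x,y) = (f(x)(y) - max_{y' ≠ y} f(x)(y'))/2` of a scoring function. -/
noncomputable def margin {X Y : Type*} [Fintype Y] [DecidableEq Y] [Nontrivial Y]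
    (f : X → Y → ℝ) (x : X) (y : Y) : ℝ :=
  (f x y - (Finset.univ.erase y).sup'
      (by obtain ⟨b, hb⟩ := exists_ne y
          exact ⟨b, Finset.mem_erase.mpr ⟨hb, Finset.mem_univ b⟩⟩) (f x)) / 2

section Ramp

lemma ramp_nonneg (μ v : ℝ) : 0 ≤ ramp μ v := by
  unfold ramp
  split_ifs with h₁ h₂
  · rfl
  · exact zero_le_one
  · have : v / μ < 1 := (div_lt_one (by linarith)).mpr (not_le.mp h₁)
    linarith

lemma ramp_le_one (μ v : ℝ) : ramp μ v ≤ 1 := by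
  unfold ramp
  split_ifs with h₁ h₂
  · exact zero_le_one
  · rfl
  · have : 0 ≤ v / μ := div_nonneg (by linarith) (by linarith)
    linarith

lemma ramp_of_nonpos {μ v : ℝ} (hμ : 0 < μ) (hv : v ≤ 0) : ramp μ v = 1 := by
  rw [ramp, if_neg (by linarith), if_pos hv]

end Ramp

section Margin

variable {X Y : Type*} [Fintype Y] [DecidableEq Y] [Nontrivial Y]

lemma margin_nonpos_of_le {f : X → Y → ℝ} {x : X} {y y' : Y} (hne : y' ≠ y)
    (hle : f x y ≤ f x y') : margin f x y ≤ 0 := by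
  have hy' : y' ∈ Finset.univ.erase y := Finset.mem_erase.mpr ⟨hne, Finset.mem_univ _⟩
  have := Finset.le_sup' (f x) hy'
  unfold margin
  linarith

lemma margin_nonpos_of_margin_pos {f : X → Y → ℝ} {x : X} {y y' : Y} (hne : y' ≠ y)
    (hpos : 0 < margin f x y) : margin f x y' ≤ 0 := by
  refine margin_nonpos_of_le hne.symm (le_of_not_gt fun hlt => ?_)
  exact (margin_nonpos_of_le hne hlt.le).not_gt hpos

variable {μ : ℝ}

lemma ite_ne_le_ramp_margin_add_ramp_margin (hμ : 0 < μ) (g : X → Y → ℝ) (x : X) (y y' : Y) :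
    (if y' ≠ y then (1 : ℝ) else 0) ≤ ramp μ (margin g x y) + ramp μ (margin g x y') := by
  have h₀ := ramp_nonneg μ (margin g x y)
  have h₀' := ramp_nonneg μ (margin g x y')
  split_ifs with hne
  · rcases le_or_gt (margin g x y) 0 with hle | hpos
    · rw [ramp_of_nonpos hμ hle]
      linarith
    · rw [ramp_of_nonpos hμ (margin_nonpos_of_margin_pos hne hpos)]
      linarith
  · linarith

lemma ramp_margin_argmax_le (hμ : 0 < μ) (f g : X → Y → ℝ) {x : X} {ŷ : Y}
    (hŷ : ∀ y, f x y ≤ f x ŷ) (y : Y) :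
    ramp μ (margin g x ŷ) ≤ ramp μ (margin f x y) + ramp μ (margin g x y) := by
  have h₀ := ramp_nonneg μ (margin g x y)
  by_cases hy : ŷ = y
  · subst hy
    linarith [ramp_nonneg μ (margin f x ŷ)]
  · rw [ramp_of_nonpos hμ (margin_nonpos_of_le hy (hŷ y))]
    linarith [ramp_le_one μ (margin g x ŷ)]

end Margin

lemma integral_le_integral_add_of_le {Ω : Type*} [MeasurableSpace Ω] {ν : Measure Ω}
    {u v w : Ω → ℝ} (hu : 0 ≤ u) (hv : Integrable v ν) (hw : Integrable w ν)
    (hle : ∀ z, u z ≤ v z + w z) : ∫ z, u z ∂ν ≤ (∫ z, v z ∂ν) + ∫ z, w z ∂ν := by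
  rw [← integral_add hv hw]
  exact integral_mono_of_nonneg (.of_forall hu) (hv.add hw) (.of_forall hle)

lemma le_sum_mul_of_forall_le {ι : Type*} [Fintype ι] {α c : ι → ℝ} {b : ℝ}
    (hα0 : ∀ j, 0 ≤ α j) (hα1 : ∑ j, α j = 1) (hle : ∀ j, b ≤ c j) : b ≤ ∑ j, α j * c j := by
  calc b = ∑ j, α j * b := by rw [← Finset.sum_mul, hα1, one_mul]
    _ ≤ ∑ j, α j * c j :=
      Finset.sum_le_sum fun j _ => mul_le_mul_of_nonneg_left (hle j) (hα0 j)

theorem multi_source_bound_general {X Y : Type*} [MeasurableSpace X] [MeasurableSpace Y]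
    [Fintype Y] [DecidableEq Y] [Nontrivial Y]
    {N : ℕ} (P : Fin N → Measure (X × Y))
    (Q : Measure (X × Y))
    (μ : ℝ) (hμ : 0 < μ)
    (α : Fin N → ℝ) (hα0 : ∀ j, 0 ≤ α j) (hα1 : ∑ j, α j = 1)
    (F : Set (X → Y → ℝ))
    (lab : (X → Y → ℝ) → X → Y)
    (hlab : ∀ (g : X → Y → ℝ) (x : X) (y : Y), g x y ≤ g x (lab g x))
    (f : X → Y → ℝ) (hfF : f ∈ F)
    (β : ℝ)
    (hβ : IsLeast {v : ℝ | ∃ g ∈ F,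
      v = (∑ j, α j * ∫ z, ramp μ (margin g z.1 z.2) ∂(P j))
        + ∫ z, ramp μ (margin g z.1 z.2) ∂Q} β)
    (d : Fin N → ℝ)
    (hd : ∀ j, IsLUB {v : ℝ | ∃ f' ∈ F,
      v = (∫ z, ramp μ (margin f' z.1 (lab f z.1)) ∂Q)
        - ∫ z, ramp μ (margin f' z.1 (lab f z.1)) ∂(P j)} (d j))
    (hint : ∀ g ∈ F, ∀ j,
      Integrable (fun z : X × Y => ramp μ (margin g z.1 (lab f z.1))) (P j) ∧
      Integrable (fun z : X × Y => ramp μ (margin g z.1 (lab f z.1))) Q ∧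
      Integrable (fun z : X × Y => ramp μ (margin g z.1 z.2)) (P j) ∧
      Integrable (fun z : X × Y => ramp μ (margin g z.1 z.2)) Q) :
    (∫ z, (if lab f z.1 ≠ z.2 then (1 : ℝ) else 0) ∂Q)
      ≤ (∑ j, α j * ((∫ z, ramp μ (margin f z.1 z.2) ∂(P j)) + d j)) + β := by
  obtain ⟨⟨g, hgF, rfl⟩, -⟩ := hβ
  obtain ⟨j₀⟩ : Nonempty (Fin N) := Fin.pos_iff_nonempty.mp <|
    Nat.pos_of_ne_zero fun hN => by subst hN; simp at hα1
  have herr := integral_le_integral_add_of_le (ν := Q)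
    (fun z => by positivity) (hint g hgF j₀).2.2.2 (hint g hgF j₀).2.1
    fun z => ite_ne_le_ramp_margin_add_ramp_margin hμ g z.1 z.2 (lab f z.1)
  have hcross : ∫ z, ramp μ (margin g z.1 (lab f z.1)) ∂Q ≤ ∑ j, α j *
      (((∫ z, ramp μ (margin f z.1 z.2) ∂(P j)) + d j) + ∫ z, ramp μ (margin g z.1 z.2) ∂(P j)) :=
    le_sum_mul_of_forall_le hα0 hα1 fun j => by
      have hshift := (hd j).1 ⟨g, hgF, rfl⟩
      have hsource := integral_le_integral_add_of_le (ν := P j)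
        (fun z => ramp_nonneg μ _) (hint f hfF j).2.2.1 (hint g hgF j).2.2.1
        fun z => ramp_margin_argmax_le hμ f g (hlab f z.1) z.2
      linarith
  simp only [mul_add, Finset.sum_add_distrib] at hcross ⊢
  linarith

/-- Multi-source generalization bound:
`L_Q(h_f) ≤ Σ_j α_j (L^μ_{P_j}(f) + d^μ_f(P_j, Q)) + β`, where `β` is the weighted ideal
combined margin loss over `F` and `d j` is the margin disparity discrepancy between `P j`
and `Q` (a supremum over `F`), for the labeling function `lab f` induced by `f`. -/
theorem multi_source_bound {X Y : Type*} [MeasurableSpace X] [MeasurableSpace Y]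
    [Fintype Y] [DecidableEq Y] [Nontrivial Y]
    {N : ℕ} (P : Fin N → Measure (X × Y)) [∀ j, IsProbabilityMeasure (P j)]
    (Q : Measure (X × Y)) [IsProbabilityMeasure Q]
    (μ : ℝ) (hμ : 0 < μ)
    (α : Fin N → ℝ) (hα0 : ∀ j, 0 ≤ α j) (hα1 : ∑ j, α j = 1)
    (F : Set (X → Y → ℝ)) (hF : F.Nonempty)
    (lab : (X → Y → ℝ) → X → Y)
    (hlab : ∀ (g : X → Y → ℝ) (x : X) (y : Y), g x y ≤ g x (lab g x))
    (f : X → Y → ℝ) (hfF : f ∈ F)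
    (β : ℝ)
    (hβ : IsLeast {v : ℝ | ∃ g ∈ F,
      v = (∑ j, α j * ∫ z, ramp μ (margin g z.1 z.2) ∂(P j))
        + ∫ z, ramp μ (margin g z.1 z.2) ∂Q} β)
    (d : Fin N → ℝ)
    (hd : ∀ j, IsLUB {v : ℝ | ∃ f' ∈ F,
      v = (∫ z, ramp μ (margin f' z.1 (lab f z.1)) ∂Q)
        - ∫ z, ramp μ (margin f' z.1 (lab f z.1)) ∂(P j)} (d j))
    (hint : ∀ g ∈ F, ∀ j,
      Integrable (fun z : X × Y => ramp μ (margin g z.1 (lab f z.1))) (P j) ∧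
      Integrable (fun z : X × Y => ramp μ (margin g z.1 (lab f z.1))) Q ∧
      Integrable (fun z : X × Y => ramp μ (margin g z.1 z.2)) (P j) ∧
      Integrable (fun z : X × Y => ramp μ (margin g z.1 z.2)) Q)
    (hind : Integrable (fun z : X × Y => if lab f z.1 ≠ z.2 then (1 : ℝ) else 0) Q) :
    (∫ z, (if lab f z.1 ≠ z.2 then (1 : ℝ) else 0) ∂Q)
      ≤ (∑ j, α j * ((∫ z, ramp μ (margin f z.1 z.2) ∂(P j)) + d j)) + β :=
  multi_source_bound_general P Q μ hμ α hα0 hα1 F lab hlab f hfF β hβ d hd hint
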